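/- Let h and h′ be two positive-definite Hermitian inner products on 𝔤^{1,0} such that h(𝔥^{1,0}, 𝔍^{1,0}) = 0 = h′(𝔥^{1,0}, 𝔍^{1,0}) and such that both are diagonal on 𝔥^{1,0} with respect to the frame {Z_1,…,Z_r}, i.e. h(Z_i, Z_j) = A_i·δ_{ij} and h′(Z_i, Z_j) = A′_i·δ_{ij} with A_i, A′_i > 0 (the restrictions to 𝔍^{1,0} are arbitrary). Then the associated Bismut-Ricci forms agree on mixed pairs: ρ_B(ω)(X,Y) = ρ_B(ω′)(X,Y) for every X ∈ 𝔤^{1,0} and Y ∈ 𝔤^{0,1}. That is, in this setting the (1,1)-component of the Bismut-Ricci form does not depend on the metric. -/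

import Mathlib

/-!
Write `⁅X, Y⁆ = ξ + η` with `ξ ∈ 𝔤^{1,0}`, `η ∈ 𝔤^{0,1}`. Contracting with the inverse Gram
matrix is taking an `h`-trace, so the first two sums of `ρ_B` are `√-1·tr(ad ξ)` and
`-√-1·conj tr(ad ση)` on `𝔤^{1,0}`, whatever `h` is. For the third, the relations of `𝔤` give
`⁅u, σv⁆ = ∑ₖ (conj cₖ(v)·Φₖ u - cₖ(u)·σ(Φₖ v))`, where `cₖ` is the `Zₖ`-coordinate and `Φₖ u`
the `(1,0)`-part of `⁅u, Z̄ₖ⁆`. Hence `ω(⁅X, Y⁆, J⁅u, σv⁆)` is a sum of rank-one sesquilinear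
forms in `(u, v)`, and since `h` is diagonal with `𝔥^{1,0} ⊥ 𝔍^{1,0}` we have `cₖ = h(·, Zₖ)/Aₖ`.
The `h`-trace of the third sum is therefore `∑ₖ (h(Φₖ Zₖ, ση) - h(ξ, Φₖ Zₖ))/Aₖ`, and
`Φₖ Zₖ = -(√-1/2)·Zₖ` makes the `Aₖ` cancel.
-/

open Complex

section GramMatrix

open scoped Matrix

variable {ι : Type*} [Fintype ι] [DecidableEq ι] {g ginv : ι → ι → ℂ}

theorem inv_mul_eq_one_of_mul_eq_one
    (hinv : ∀ a b, ∑ c, g a c * ginv c b = if a = b then 1 else 0) (a b : ι) :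
    ∑ c, ginv a c * g c b = if a = b then 1 else 0 := by
  have hm : Matrix.of g * Matrix.of ginv = 1 := by
    ext a b; simpa [Matrix.mul_apply, Matrix.one_apply] using hinv a b
  simpa [Matrix.mul_apply, Matrix.one_apply] using
    congrArg (fun A : Matrix ι ι ℂ => A a b) (mul_eq_one_comm.mp hm)

theorem conj_inv_apply_of_conj_apply (hg : ∀ a b, starRingEnd ℂ (g a b) = g b a)
    (hinv : ∀ a b, ∑ c, g a c * ginv c b = if a = b then 1 else 0) (a b : ι) :
    starRingEnd ℂ (ginv a b) = ginv b a := by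
  have hm : Matrix.of g * Matrix.of ginv = 1 := by
    ext a b; simpa [Matrix.mul_apply, Matrix.one_apply] using hinv a b
  have hG : (Matrix.of g)ᴴ = Matrix.of g := by
    ext a b; simpa [Matrix.conjTranspose_apply] using hg b a
  have hGi : (Matrix.of ginv)ᴴ = Matrix.of ginv := by
    rw [← Matrix.inv_eq_right_inv hm, Matrix.conjTranspose_nonsing_inv, hG]
  simpa [Matrix.conjTranspose_apply] using congrArg (fun A : Matrix ι ι ℂ => A b a) hGi

variable {M : Type*} [AddCommGroup M] [Module ℂ M] {h : M →ₗ[ℂ] M →ₛₗ[starRingEnd ℂ] ℂ}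
  {X : ι → M}

theorem sum_conj_inv_mul_apply_sum_smul (hg : ∀ a b, g a b = h (X a) (X b))
    (hinv : ∀ a b, ∑ c, g a c * ginv c b = if a = b then 1 else 0)
    (hginv : ∀ a b, starRingEnd ℂ (ginv a b) = ginv b a) (x : ι → ℂ) (a : ι) :
    ∑ b, starRingEnd ℂ (ginv a b) * h (∑ c, x c • X c) (X b) = x a := by
  calc ∑ b, starRingEnd ℂ (ginv a b) * h (∑ c, x c • X c) (X b)
      = ∑ c, x c * ∑ b, g c b * ginv b a := by
        simp only [map_sum, map_smul, LinearMap.sum_apply, LinearMap.smul_apply, smul_eq_mul,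
          hginv, ← hg, Finset.mul_sum]
        rw [Finset.sum_comm]
        exact Finset.sum_congr rfl fun _ _ => Finset.sum_congr rfl fun _ _ => by ring
    _ = x a := by simp [hinv]

theorem sum_conj_inv_mul_sum_smul_apply (hg : ∀ a b, g a b = h (X a) (X b))
    (hinv_mul : ∀ a b, ∑ c, ginv a c * g c b = if a = b then 1 else 0)
    (hginv : ∀ a b, starRingEnd ℂ (ginv a b) = ginv b a) (x : ι → ℂ) (b : ι) :
    ∑ a, starRingEnd ℂ (ginv a b) * h (X a) (∑ c, x c • X c) = starRingEnd ℂ (x b) := by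
  calc ∑ a, starRingEnd ℂ (ginv a b) * h (X a) (∑ c, x c • X c)
      = ∑ c, starRingEnd ℂ (x c) * ∑ a, ginv b a * g a c := by
        simp only [map_sum, LinearMap.map_smulₛₗ, smul_eq_mul, hginv, ← hg, Finset.mul_sum]
        rw [Finset.sum_comm]
        exact Finset.sum_congr rfl fun _ _ => Finset.sum_congr rfl fun _ _ => by ring
    _ = starRingEnd ℂ (x b) := by simp [hinv_mul]

theorem sum_sum_conj_inv_mul_left (hg : ∀ a b, g a b = h (X a) (X b))
    (hinv : ∀ a b, ∑ c, g a c * ginv c b = if a = b then 1 else 0)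
    (hginv : ∀ a b, starRingEnd ℂ (ginv a b) = ginv b a) (α : M →ₗ[ℂ] ℂ) {q : M}
    (hq : q ∈ Submodule.span ℂ (Set.range X)) :
    ∑ a, ∑ b, starRingEnd ℂ (ginv a b) * (α (X a) * h q (X b)) = α q := by
  obtain ⟨x, rfl⟩ := (Submodule.mem_span_range_iff_exists_fun ℂ).mp hq
  calc ∑ a, ∑ b, starRingEnd ℂ (ginv a b) * (α (X a) * h (∑ c, x c • X c) (X b))
      = ∑ a, α (X a) * ∑ b, starRingEnd ℂ (ginv a b) * h (∑ c, x c • X c) (X b) := by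
        simp only [Finset.mul_sum]
        exact Finset.sum_congr rfl fun _ _ => Finset.sum_congr rfl fun _ _ => by ring
    _ = α (∑ c, x c • X c) := by
        rw [map_sum α]
        refine Finset.sum_congr rfl fun a _ => ?_
        rw [sum_conj_inv_mul_apply_sum_smul hg hinv hginv, map_smul, smul_eq_mul, mul_comm]

theorem sum_sum_conj_inv_mul_right (hg : ∀ a b, g a b = h (X a) (X b))
    (hinv_mul : ∀ a b, ∑ c, ginv a c * g c b = if a = b then 1 else 0)
    (hginv : ∀ a b, starRingEnd ℂ (ginv a b) = ginv b a) (β : M →ₛₗ[starRingEnd ℂ] ℂ) {p : M}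
    (hp : p ∈ Submodule.span ℂ (Set.range X)) :
    ∑ a, ∑ b, starRingEnd ℂ (ginv a b) * (h (X a) p * β (X b)) = β p := by
  obtain ⟨x, rfl⟩ := (Submodule.mem_span_range_iff_exists_fun ℂ).mp hp
  calc ∑ a, ∑ b, starRingEnd ℂ (ginv a b) * (h (X a) (∑ c, x c • X c) * β (X b))
      = ∑ b, β (X b) * ∑ a, starRingEnd ℂ (ginv a b) * h (X a) (∑ c, x c • X c) := by
        simp only [Finset.mul_sum]
        rw [Finset.sum_comm]
        exact Finset.sum_congr rfl fun _ _ => Finset.sum_congr rfl fun _ _ => by ring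
    _ = β (∑ c, x c • X c) := by
        rw [map_sum β]
        refine Finset.sum_congr rfl fun b _ => ?_
        rw [sum_conj_inv_mul_sum_smul_apply hg hinv_mul hginv, LinearMap.map_smulₛₗ, smul_eq_mul,
          mul_comm]

theorem sum_sum_conj_inv_mul_eq_trace {V : Submodule ℂ M} (hX : LinearIndependent ℂ X)
    (hXV : Submodule.span ℂ (Set.range X) = V) (hg : ∀ a b, g a b = h (X a) (X b))
    (hinv : ∀ a b, ∑ c, g a c * ginv c b = if a = b then 1 else 0)
    (hginv : ∀ a b, starRingEnd ℂ (ginv a b) = ginv b a) (T : M →ₗ[ℂ] M)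
    (hT : ∀ v ∈ V, T v ∈ V) :
    ∑ a, ∑ b, starRingEnd ℂ (ginv a b) * h (T (X a)) (X b) =
      LinearMap.trace ℂ V (T.restrict hT) := by
  subst hXV
  set e := Module.Basis.span hX
  have hTX : ∀ a, T (X a) = ∑ c, e.repr (T.restrict hT (e a)) c • X c := by
    intro a
    have := congrArg Subtype.val (e.sum_repr (T.restrict hT (e a)))
    simpa [e, Submodule.coe_sum] using this.symm
  rw [LinearMap.trace_eq_matrix_trace ℂ e, Matrix.trace]
  refine Finset.sum_congr rfl fun a _ => ?_
  rw [Matrix.diag_apply, LinearMap.toMatrix_apply, hTX a,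
    sum_conj_inv_mul_apply_sum_smul hg hinv hginv]

end GramMatrix

section FundamentalForm

variable {M : Type*} [AddCommGroup M] [Module ℂ M] {V Vb : Submodule ℂ M}
  {σ : M →ₛₗ[starRingEnd ℂ] M} {h : M →ₗ[ℂ] M →ₛₗ[starRingEnd ℂ] ℂ} {ω : M →ₗ[ℂ] M →ₗ[ℂ] ℂ}

theorem proj_add_eq_of_disjoint {p10 p01 : M → M} (hVVb : Disjoint V Vb)
    (hp : ∀ v, p10 v ∈ V ∧ p01 v ∈ Vb ∧ p10 v + p01 v = v) {a b : M} (ha : a ∈ V)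
    (hb : b ∈ Vb) : p10 (a + b) = a ∧ p01 (a + b) = b := by
  obtain ⟨h10, h01, hsum⟩ := hp (a + b)
  have hdiff : p10 (a + b) - a = b - p01 (a + b) := by
    rw [sub_eq_sub_iff_add_eq_add, hsum, add_comm]
  have hzero : p10 (a + b) - a = 0 :=
    Submodule.disjoint_def.mp hVVb _ (sub_mem h10 ha) (hdiff ▸ sub_mem hb h01)
  rw [hzero, eq_comm, sub_eq_zero] at hdiff
  exact ⟨sub_eq_zero.mp hzero, hdiff.symm⟩

theorem fundamental_sigma_apply (hωalt : ω.IsAlt)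
    (hherm : ∀ x ∈ V, ∀ y ∈ V, h x y = starRingEnd ℂ (h y x))
    (hωh : ∀ x ∈ V, ∀ y ∈ V, ω x (σ y) = I * h x y) {u x : M} (hu : u ∈ V) (hx : x ∈ V) :
    ω (σ u) x = -(I * starRingEnd ℂ (h u x)) := by
  rw [← hωalt.neg, hωh x hx u hu, hherm x hx u hu]

theorem fundamental_add_apply_I_smul_sub (hσinv : ∀ x, σ (σ x) = x)
    (hσVb : ∀ v ∈ Vb, σ v ∈ V) (hωalt : ω.IsAlt) (hω10 : ∀ x ∈ V, ∀ y ∈ V, ω x y = 0)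
    (hω01 : ∀ x ∈ Vb, ∀ y ∈ Vb, ω x y = 0) (hωh : ∀ x ∈ V, ∀ y ∈ V, ω x (σ y) = I * h x y)
    {ξ a η b : M} (hξ : ξ ∈ V) (ha : a ∈ V) (hη : η ∈ Vb) (hb : b ∈ Vb) :
    ω (ξ + η) (I • a - I • b) = h a (σ η) + h ξ (σ b) := by
  have hξb : ω ξ b = I * h ξ (σ b) := by rw [← hωh ξ hξ _ (hσVb b hb), hσinv]
  have hηa : ω η a = -(I * h a (σ η)) := by
    rw [← hωalt.neg, ← hωh a ha _ (hσVb η hη), hσinv]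
  simp only [map_add, map_sub, map_smul, LinearMap.add_apply, smul_eq_mul, hω10 ξ hξ a ha,
    hω01 η hη b hb, hξb, hηa]
  linear_combination (-h ξ (σ b) - h a (σ η)) * I_mul_I

end FundamentalForm

section LieAlgebra

open Submodule (span)
open Set (range)

variable {L : Type*} [LieRing L] [LieAlgebra ℂ L]

theorem lie_mem_of_mem_span {S T : Set L} {p : Submodule ℂ L}
    (hST : ∀ x ∈ S, ∀ y ∈ T, ⁅x, y⁆ ∈ p) {x y : L} (hx : x ∈ span ℂ S) (hy : y ∈ span ℂ T) :
    ⁅x, y⁆ ∈ p := by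
  let bracket : L →ₗ[ℂ] L →ₗ[ℂ] L :=
    LinearMap.mk₂ ℂ (fun x y => ⁅x, y⁆) add_lie smul_lie lie_add lie_smul
  have hmem := Submodule.apply_mem_map₂ bracket hx hy
  rw [Submodule.map₂_span_span] at hmem
  refine Submodule.span_le.mpr ?_ hmem
  rintro _ ⟨x, hx, y, hy, rfl⟩
  exact hST x hx y hy

theorem apply_mem_span_range_union {ι κ : Type*} (f : L →ₛₗ[starRingEnd ℂ] L) {P : ι → L}
    {Q : κ → L} {v : L} (hv : v ∈ span ℂ (range P ∪ range Q)) :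
    f v ∈ span ℂ (range (f ∘ P) ∪ range (f ∘ Q)) := by
  rw [Set.range_comp, Set.range_comp, ← Set.image_union, ← Submodule.map_span]
  exact Submodule.mem_map_of_mem hv

variable {r s : ℕ} {σ : L →ₛₗ[starRingEnd ℂ] L} {Z Zb : Fin r → L} {W Wb : Fin s → L}
  {c : Fin r → L →ₗ[ℂ] ℂ} {pW : L →ₗ[ℂ] L}

/-- `c k` is the coordinate along `Z k` and `pW` the projection onto `𝔍^{1,0}` for the
decomposition `𝔤^{1,0} = 𝔥^{1,0} ⊕ 𝔍^{1,0}`. -/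
structure IsSemidirectFrame (σ : L →ₛₗ[starRingEnd ℂ] L) (Z Zb : Fin r → L) (W Wb : Fin s → L)
    (c : Fin r → L →ₗ[ℂ] ℂ) (pW : L →ₗ[ℂ] L) : Prop where
  lie_Z_Zb : ∀ k l, ⁅Z k, Zb l⁆ = if k = l then (-(I / 2)) • (Z k + Zb k) else 0
  lie_Z_Z : ∀ k l, ⁅Z k, Z l⁆ = 0
  lie_Z_W : ∀ k a, ⁅Z k, W a⁆ ∈ span ℂ (range W)
  lie_Zb_W : ∀ k a, ⁅Zb k, W a⁆ ∈ span ℂ (range W)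
  lie_W_W : ∀ a b, ⁅W a, W b⁆ = 0
  lie_W_Wb : ∀ a b, ⁅W a, Wb b⁆ = 0
  sigma_sigma : ∀ x, σ (σ x) = x
  sigma_Z : ∀ k, σ (Z k) = Zb k
  sigma_W : ∀ a, σ (W a) = Wb a
  sigma_lie : ∀ x y, σ ⁅x, y⁆ = ⁅σ x, σ y⁆
  coord_Z : ∀ k l, c k (Z l) = if k = l then 1 else 0
  coord_W : ∀ k a, c k (W a) = 0
  proj_Z : ∀ k, pW (Z k) = 0
  proj_W : ∀ a, pW (W a) = W a
  proj_mem : ∀ u, pW u ∈ span ℂ (range W)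
  disjoint : Disjoint (span ℂ (range Z ∪ range W)) (span ℂ (range Zb ∪ range Wb))

namespace IsSemidirectFrame

theorem sigma_Zb (F : IsSemidirectFrame σ Z Zb W Wb c pW) (k : Fin r) : σ (Zb k) = Z k := by
  rw [← F.sigma_Z, F.sigma_sigma]

theorem sigma_Wb (F : IsSemidirectFrame σ Z Zb W Wb c pW) (a : Fin s) : σ (Wb a) = W a := by
  rw [← F.sigma_W, F.sigma_sigma]

theorem sigma_mem_span_W (F : IsSemidirectFrame σ Z Zb W Wb c pW) {w : L}
    (hw : w ∈ span ℂ (range W)) : σ w ∈ span ℂ (range Wb) := by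
  have hσw := Submodule.mem_map_of_mem (f := σ) hw
  rwa [Submodule.map_span, ← Set.range_comp, show σ ∘ W = Wb from funext F.sigma_W] at hσw

theorem sigma_mem_conj (F : IsSemidirectFrame σ Z Zb W Wb c pW) {v : L}
    (hv : v ∈ span ℂ (range Z ∪ range W)) : σ v ∈ span ℂ (range Zb ∪ range Wb) := by
  have hσv := apply_mem_span_range_union σ hv
  rwa [show σ ∘ Z = Zb from funext F.sigma_Z, show σ ∘ W = Wb from funext F.sigma_W] at hσv

theorem sigma_mem_hol (F : IsSemidirectFrame σ Z Zb W Wb c pW) {v : L}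
    (hv : v ∈ span ℂ (range Zb ∪ range Wb)) : σ v ∈ span ℂ (range Z ∪ range W) := by
  have hσv := apply_mem_span_range_union σ hv
  rwa [show σ ∘ Zb = Z from funext F.sigma_Zb, show σ ∘ Wb = W from funext F.sigma_Wb] at hσv

theorem lie_mem_hol (F : IsSemidirectFrame σ Z Zb W Wb c pW) {x y : L}
    (hx : x ∈ span ℂ (range Z ∪ range W)) (hy : y ∈ span ℂ (range Z ∪ range W)) :
    ⁅x, y⁆ ∈ span ℂ (range Z ∪ range W) := by
  have hW : span ℂ (range W) ≤ span ℂ (range Z ∪ range W) :=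
    Submodule.span_mono Set.subset_union_right
  refine lie_mem_of_mem_span ?_ hx hy
  rintro _ (⟨k, rfl⟩ | ⟨a, rfl⟩) _ (⟨l, rfl⟩ | ⟨b, rfl⟩)
  · rw [F.lie_Z_Z]; exact zero_mem _
  · exact hW (F.lie_Z_W k b)
  · rw [← lie_skew]; exact neg_mem (hW (F.lie_Z_W l a))
  · rw [F.lie_W_W]; exact zero_mem _

theorem ad_mem (F : IsSemidirectFrame σ Z Zb W Wb c pW) {x : L}
    (hx : x ∈ span ℂ (range Z ∪ range W)) :
    ∀ y ∈ span ℂ (range Z ∪ range W), LieAlgebra.ad ℂ L x y ∈ span ℂ (range Z ∪ range W) :=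
  fun _ hy => F.lie_mem_hol hx hy

theorem lie_eq_zero_of_mem_span (F : IsSemidirectFrame σ Z Zb W Wb c pW) {x y : L}
    (hx : x ∈ span ℂ (range W)) (hy : y ∈ span ℂ (range Wb)) : ⁅x, y⁆ = 0 := by
  refine (Submodule.mem_bot ℂ).mp (lie_mem_of_mem_span ?_ hx hy)
  rintro _ ⟨a, rfl⟩ _ ⟨b, rfl⟩
  rw [F.lie_W_Wb]; exact zero_mem _

theorem sum_smul_add_proj_eq (F : IsSemidirectFrame σ Z Zb W Wb c pW) {u : L}
    (hu : u ∈ span ℂ (range Z ∪ range W)) : ∑ k, c k u • Z k + pW u = u := by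
  have := LinearMap.eqOn_span' (f := ∑ k, (c k).smulRight (Z k) + pW) (g := LinearMap.id)
    (s := range Z ∪ range W) ?_ hu
  · simpa [LinearMap.sum_apply] using this
  · rintro _ (⟨l, rfl⟩ | ⟨a, rfl⟩) <;>
      simp [LinearMap.sum_apply, F.coord_Z, F.coord_W, F.proj_Z, F.proj_W]

end IsSemidirectFrame

/-- The `(1,0)`-component of `⁅u, Zb k⁆` for `u ∈ 𝔤^{1,0}`. -/
noncomputable def holLieZb (c : Fin r → L →ₗ[ℂ] ℂ) (pW : L →ₗ[ℂ] L) (Z Zb : Fin r → L)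
    (k : Fin r) : L →ₗ[ℂ] L :=
  (-(I / 2)) • (c k).smulRight (Z k) - LieAlgebra.ad ℂ L (Zb k) ∘ₗ pW

theorem holLieZb_apply (k : Fin r) (u : L) :
    holLieZb c pW Z Zb k u = (-(I / 2) * c k u) • Z k - ⁅Zb k, pW u⁆ := by
  simp [holLieZb, mul_smul]

namespace IsSemidirectFrame

theorem holLieZb_mem (F : IsSemidirectFrame σ Z Zb W Wb c pW) (k : Fin r) (u : L) :
    holLieZb c pW Z Zb k u ∈ span ℂ (range Z ∪ range W) := by
  rw [holLieZb_apply]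
  refine sub_mem (Submodule.smul_mem _ _ (Submodule.subset_span (Or.inl ⟨k, rfl⟩)))
    (Submodule.span_mono Set.subset_union_right ?_)
  refine lie_mem_of_mem_span (S := {Zb k}) ?_ (Submodule.subset_span rfl) (F.proj_mem u)
  rintro _ rfl _ ⟨a, rfl⟩
  exact F.lie_Zb_W k a

theorem lie_Zb_eq (F : IsSemidirectFrame σ Z Zb W Wb c pW) {u : L}
    (hu : u ∈ span ℂ (range Z ∪ range W)) (k : Fin r) :
    ⁅u, Zb k⁆ = holLieZb c pW Z Zb k u + (-(I / 2) * c k u) • Zb k := by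
  conv_lhs => rw [← F.sum_smul_add_proj_eq hu]
  rw [add_lie, sum_lie, ← lie_skew (pW u)]
  simp only [smul_lie, F.lie_Z_Zb, smul_ite, smul_zero, Finset.sum_ite_eq', Finset.mem_univ,
    if_true, holLieZb_apply]
  module

theorem lie_sigma_of_mem_span_W (F : IsSemidirectFrame σ Z Zb W Wb c pW) {u w : L}
    (hu : u ∈ span ℂ (range Z ∪ range W)) (hw : w ∈ span ℂ (range W)) :
    ⁅u, σ w⁆ = ∑ k, c k u • σ ⁅Zb k, w⁆ := by
  conv_lhs => rw [← F.sum_smul_add_proj_eq hu]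
  rw [add_lie, sum_lie, F.lie_eq_zero_of_mem_span (F.proj_mem u) (F.sigma_mem_span_W hw), add_zero]
  refine Finset.sum_congr rfl fun k _ => ?_
  rw [smul_lie, F.sigma_lie, F.sigma_Zb]

theorem lie_sigma_eq_sum (F : IsSemidirectFrame σ Z Zb W Wb c pW) {u v : L}
    (hu : u ∈ span ℂ (range Z ∪ range W)) (hv : v ∈ span ℂ (range Z ∪ range W)) :
    ⁅u, σ v⁆ = ∑ k, (starRingEnd ℂ (c k v) • holLieZb c pW Z Zb k u
      - c k u • σ (holLieZb c pW Z Zb k v)) := by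
  have hσv : σ v = ∑ k, starRingEnd ℂ (c k v) • Zb k + σ (pW v) := by
    conv_lhs => rw [← F.sum_smul_add_proj_eq hv]
    simp [LinearMap.map_smulₛₗ, F.sigma_Z]
  rw [hσv, lie_add, lie_sum, F.lie_sigma_of_mem_span_W hu (F.proj_mem v), ← Finset.sum_add_distrib]
  refine Finset.sum_congr rfl fun k _ => ?_
  rw [lie_smul, F.lie_Zb_eq hu k, holLieZb_apply k v]
  simp only [map_sub, LinearMap.map_smulₛₗ, F.sigma_Z, map_mul, map_neg, map_div₀, conj_I,
    map_ofNat]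
  module

end IsSemidirectFrame

structure IsAdaptedMetric (σ : L →ₛₗ[starRingEnd ℂ] L) (Z Zb : Fin r → L) (W Wb : Fin s → L)
    (h : L →ₗ[ℂ] L →ₛₗ[starRingEnd ℂ] ℂ) (ω : L →ₗ[ℂ] L →ₗ[ℂ] ℂ) (A : Fin r → ℝ) : Prop where
  herm : ∀ x ∈ span ℂ (range Z ∪ range W), ∀ y ∈ span ℂ (range Z ∪ range W),
    h x y = starRingEnd ℂ (h y x)
  orth : ∀ x ∈ span ℂ (range Z), ∀ y ∈ span ℂ (range W), h x y = 0
  diag : ∀ i j, h (Z i) (Z j) = if i = j then (A i : ℂ) else 0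
  diag_ne_zero : ∀ i, A i ≠ 0
  alt : ω.IsAlt
  fundamental_hol : ∀ x ∈ span ℂ (range Z ∪ range W), ∀ y ∈ span ℂ (range Z ∪ range W),
    ω x y = 0
  fundamental_conj : ∀ x ∈ span ℂ (range Zb ∪ range Wb), ∀ y ∈ span ℂ (range Zb ∪ range Wb),
    ω x y = 0
  fundamental_sigma : ∀ x ∈ span ℂ (range Z ∪ range W), ∀ y ∈ span ℂ (range Z ∪ range W),
    ω x (σ y) = I * h x y

namespace IsAdaptedMetric

variable {h : L →ₗ[ℂ] L →ₛₗ[starRingEnd ℂ] ℂ} {ω : L →ₗ[ℂ] L →ₗ[ℂ] ℂ} {A : Fin r → ℝ}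

theorem coord_eq (m : IsAdaptedMetric σ Z Zb W Wb h ω A) (F : IsSemidirectFrame σ Z Zb W Wb c pW)
    {u : L} (hu : u ∈ span ℂ (range Z ∪ range W)) (k : Fin r) :
    c k u = (A k : ℂ)⁻¹ * h u (Z k) := by
  have hA : (A k : ℂ) ≠ 0 := ofReal_ne_zero.mpr (m.diag_ne_zero k)
  have := LinearMap.eqOn_span' (f := h.flip (Z k)) (g := (A k : ℂ) • c k)
    (s := range Z ∪ range W) ?_ hu
  · simp only [LinearMap.flip_apply, LinearMap.smul_apply, smul_eq_mul] at this
    rw [this, inv_mul_cancel_left₀ hA]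
  · rintro _ (⟨l, rfl⟩ | ⟨a, rfl⟩)
    · by_cases hlk : l = k
      · subst hlk; simp [m.diag, F.coord_Z]
      · simp [m.diag, F.coord_Z, hlk, Ne.symm hlk]
    · simp only [LinearMap.flip_apply, LinearMap.smul_apply, smul_eq_mul, F.coord_W, mul_zero]
      rw [m.herm _ (Submodule.subset_span (Or.inr ⟨a, rfl⟩)) _
        (Submodule.subset_span (Or.inl ⟨k, rfl⟩)),
        m.orth _ (Submodule.subset_span ⟨k, rfl⟩) _ (Submodule.subset_span ⟨a, rfl⟩), map_zero]

theorem conj_coord_eq (m : IsAdaptedMetric σ Z Zb W Wb h ω A)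
    (F : IsSemidirectFrame σ Z Zb W Wb c pW) {u : L} (hu : u ∈ span ℂ (range Z ∪ range W))
    (k : Fin r) : starRingEnd ℂ (c k u) = (A k : ℂ)⁻¹ * h (Z k) u := by
  rw [m.coord_eq F hu, map_mul, map_inv₀, conj_ofReal,
    ← m.herm _ (Submodule.subset_span (Or.inl ⟨k, rfl⟩)) _ hu]

theorem fundamental_J_lie_sigma (m : IsAdaptedMetric σ Z Zb W Wb h ω A)
    (F : IsSemidirectFrame σ Z Zb W Wb c pW) {p10 p01 Jmap : L → L}
    (hp : ∀ v : L, p10 v ∈ span ℂ (range Z ∪ range W) ∧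
      p01 v ∈ span ℂ (range Zb ∪ range Wb) ∧ p10 v + p01 v = v)
    (hJmap : ∀ v, Jmap v = I • p10 v - I • p01 v) {ξ η u v : L}
    (hξ : ξ ∈ span ℂ (range Z ∪ range W)) (hη : η ∈ span ℂ (range Zb ∪ range Wb))
    (hu : u ∈ span ℂ (range Z ∪ range W)) (hv : v ∈ span ℂ (range Z ∪ range W)) :
    ω (ξ + η) (Jmap ⁅u, σ v⁆) = ∑ k, (starRingEnd ℂ (c k v) * h (holLieZb c pW Z Zb k u) (σ η)
      - c k u * h ξ (holLieZb c pW Z Zb k v)) := by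
  set a := ∑ k, starRingEnd ℂ (c k v) • holLieZb c pW Z Zb k u
  set b := -∑ k, c k u • σ (holLieZb c pW Z Zb k v)
  have ha : a ∈ span ℂ (range Z ∪ range W) :=
    Submodule.sum_mem _ fun k _ => Submodule.smul_mem _ _ (F.holLieZb_mem k u)
  have hb : b ∈ span ℂ (range Zb ∪ range Wb) := neg_mem <|
    Submodule.sum_mem _ fun k _ => Submodule.smul_mem _ _ (F.sigma_mem_conj (F.holLieZb_mem k v))
  have hsplit : ⁅u, σ v⁆ = a + b := by
    rw [F.lie_sigma_eq_sum hu hv, Finset.sum_sub_distrib, sub_eq_add_neg]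
  obtain ⟨h10, h01⟩ := proj_add_eq_of_disjoint F.disjoint hp ha hb
  rw [hsplit, hJmap, h10, h01, fundamental_add_apply_I_smul_sub F.sigma_sigma
    (fun _ => F.sigma_mem_hol) m.alt m.fundamental_hol m.fundamental_conj m.fundamental_sigma
    hξ ha hη hb]
  simp only [a, b, map_neg, map_sum, LinearMap.map_smulₛₗ, F.sigma_sigma, LinearMap.sum_apply,
    LinearMap.smul_apply, smul_eq_mul, RingHom.id_apply, conj_conj, Finset.sum_sub_distrib]
  ring

variable {ι : Type*} [Fintype ι] [DecidableEq ι] {X : ι → L} {g ginv : ι → ι → ℂ}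

theorem sum_conj_inv_mul_fundamental_J (m : IsAdaptedMetric σ Z Zb W Wb h ω A)
    (F : IsSemidirectFrame σ Z Zb W Wb c pW) {p10 p01 Jmap : L → L}
    (hp : ∀ v : L, p10 v ∈ span ℂ (range Z ∪ range W) ∧
      p01 v ∈ span ℂ (range Zb ∪ range Wb) ∧ p10 v + p01 v = v)
    (hJmap : ∀ v, Jmap v = I • p10 v - I • p01 v)
    (hXV : span ℂ (range X) = span ℂ (range Z ∪ range W)) (hg : ∀ a b, g a b = h (X a) (X b))
    (hinv : ∀ a b, ∑ c, g a c * ginv c b = if a = b then 1 else 0)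
    (hinv_mul : ∀ a b, ∑ c, ginv a c * g c b = if a = b then 1 else 0)
    (hginv : ∀ a b, starRingEnd ℂ (ginv a b) = ginv b a) {ξ η : L}
    (hξ : ξ ∈ span ℂ (range Z ∪ range W)) (hη : η ∈ span ℂ (range Zb ∪ range Wb)) :
    ∑ a, ∑ b, starRingEnd ℂ (ginv a b) * ω (ξ + η) (Jmap ⁅X a, σ (X b)⁆) =
      ∑ k, -(I / 2) * (c k ξ + starRingEnd ℂ (c k (σ η))) := by
  have hXmem : ∀ a, X a ∈ span ℂ (range Z ∪ range W) :=
    fun a => hXV ▸ Submodule.subset_span ⟨a, rfl⟩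
  have hZmem : ∀ k, Z k ∈ span ℂ (range X) :=
    fun k => hXV ▸ Submodule.subset_span (Or.inl ⟨k, rfl⟩)
  set Φ := holLieZb c pW Z Zb
  have hterm : ∀ a b, ω (ξ + η) (Jmap ⁅X a, σ (X b)⁆) = ∑ k, (A k : ℂ)⁻¹ *
      (h (Φ k (X a)) (σ η) * h (Z k) (X b) - h (X a) (Z k) * h ξ (Φ k (X b))) := by
    intro a b
    rw [m.fundamental_J_lie_sigma F hp hJmap hξ hη (hXmem a) (hXmem b)]
    refine Finset.sum_congr rfl fun k _ => ?_
    rw [m.conj_coord_eq F (hXmem b), m.coord_eq F (hXmem a)]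
    ring
  have hleft := fun k => sum_sum_conj_inv_mul_left hg hinv hginv
    ((h.flip (σ η)) ∘ₗ Φ k) (hZmem k)
  have hright := fun k => sum_sum_conj_inv_mul_right hg hinv_mul hginv ((h ξ).comp (Φ k)) (hZmem k)
  simp only [LinearMap.comp_apply, LinearMap.flip_apply] at hleft hright
  have hΦZ : ∀ k, Φ k (Z k) = (-(I / 2)) • Z k := by
    intro k
    simp [Φ, holLieZb_apply, F.coord_Z, F.proj_Z]
  calc ∑ a, ∑ b, starRingEnd ℂ (ginv a b) * ω (ξ + η) (Jmap ⁅X a, σ (X b)⁆)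
      = ∑ k, (A k : ℂ)⁻¹ *
          (∑ a, ∑ b, starRingEnd ℂ (ginv a b) * (h (Φ k (X a)) (σ η) * h (Z k) (X b))
            - ∑ a, ∑ b, starRingEnd ℂ (ginv a b) * (h (X a) (Z k) * h ξ (Φ k (X b)))) := by
        simp only [hterm, Finset.mul_sum, ← Finset.sum_sub_distrib]
        conv_lhs => arg 2; ext a; rw [Finset.sum_comm]
        rw [Finset.sum_comm]
        exact Finset.sum_congr rfl fun _ _ => Finset.sum_congr rfl fun _ _ =>
          Finset.sum_congr rfl fun _ _ => by ring
    _ = ∑ k, (A k : ℂ)⁻¹ * (h (Φ k (Z k)) (σ η) - h ξ (Φ k (Z k))) := by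
        simp only [hleft, hright]
    _ = ∑ k, -(I / 2) * (c k ξ + starRingEnd ℂ (c k (σ η))) := by
        refine Finset.sum_congr rfl fun k _ => ?_
        rw [hΦZ, m.coord_eq F hξ, m.conj_coord_eq F (F.sigma_mem_hol hη)]
        simp only [map_smul, LinearMap.smul_apply, LinearMap.map_smulₛₗ, smul_eq_mul, map_neg,
          map_div₀, conj_I, map_ofNat]
        ring

theorem sum_conj_inv_mul_fundamental_lie (m : IsAdaptedMetric σ Z Zb W Wb h ω A)
    (F : IsSemidirectFrame σ Z Zb W Wb c pW) (hX : LinearIndependent ℂ X)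
    (hXV : span ℂ (range X) = span ℂ (range Z ∪ range W)) (hg : ∀ a b, g a b = h (X a) (X b))
    (hinv : ∀ a b, ∑ c, g a c * ginv c b = if a = b then 1 else 0)
    (hginv : ∀ a b, starRingEnd ℂ (ginv a b) = ginv b a) {ξ : L}
    (hξ : ξ ∈ span ℂ (range Z ∪ range W)) :
    ∑ a, ∑ b, starRingEnd ℂ (ginv a b) * ω ⁅ξ, X a⁆ (σ (X b)) =
      I * LinearMap.trace ℂ _ ((LieAlgebra.ad ℂ L ξ).restrict (F.ad_mem hξ)) := by
  have hXmem : ∀ a, X a ∈ span ℂ (range Z ∪ range W) :=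
    fun a => hXV ▸ Submodule.subset_span ⟨a, rfl⟩
  rw [← sum_sum_conj_inv_mul_eq_trace hX hXV hg hinv hginv, Finset.mul_sum]
  refine Finset.sum_congr rfl fun a _ => ?_
  rw [Finset.mul_sum]
  refine Finset.sum_congr rfl fun b _ => ?_
  rw [m.fundamental_sigma _ (F.lie_mem_hol hξ (hXmem a)) _ (hXmem b), LieAlgebra.ad_apply]
  ring

theorem sum_inv_mul_fundamental_lie_sigma (m : IsAdaptedMetric σ Z Zb W Wb h ω A)
    (F : IsSemidirectFrame σ Z Zb W Wb c pW) (hX : LinearIndependent ℂ X)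
    (hXV : span ℂ (range X) = span ℂ (range Z ∪ range W)) (hg : ∀ a b, g a b = h (X a) (X b))
    (hinv : ∀ a b, ∑ c, g a c * ginv c b = if a = b then 1 else 0)
    (hginv : ∀ a b, starRingEnd ℂ (ginv a b) = ginv b a) {η : L}
    (hη : η ∈ span ℂ (range Zb ∪ range Wb)) :
    ∑ a, ∑ b, ginv a b * ω ⁅η, σ (X a)⁆ (X b) = -(I * starRingEnd ℂ (LinearMap.trace ℂ _
      ((LieAlgebra.ad ℂ L (σ η)).restrict (F.ad_mem (F.sigma_mem_hol hη))))) := by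
  have hXmem : ∀ a, X a ∈ span ℂ (range Z ∪ range W) :=
    fun a => hXV ▸ Submodule.subset_span ⟨a, rfl⟩
  rw [← sum_sum_conj_inv_mul_eq_trace hX hXV hg hinv hginv]
  simp only [map_sum, Finset.mul_sum, ← Finset.sum_neg_distrib]
  refine Finset.sum_congr rfl fun a _ => Finset.sum_congr rfl fun b _ => ?_
  have hlie : ⁅η, σ (X a)⁆ = σ ⁅σ η, X a⁆ := by rw [F.sigma_lie, F.sigma_sigma]
  rw [hlie, fundamental_sigma_apply m.alt m.herm m.fundamental_sigma
    (F.lie_mem_hol (F.sigma_mem_hol hη) (hXmem a)) (hXmem b), LieAlgebra.ad_apply, map_mul,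
    conj_conj]
  ring

theorem bismut_eq (m : IsAdaptedMetric σ Z Zb W Wb h ω A)
    (F : IsSemidirectFrame σ Z Zb W Wb c pW) {p10 p01 Jmap : L → L}
    (hp : ∀ v : L, p10 v ∈ span ℂ (range Z ∪ range W) ∧
      p01 v ∈ span ℂ (range Zb ∪ range Wb) ∧ p10 v + p01 v = v)
    (hJmap : ∀ v, Jmap v = I • p10 v - I • p01 v) (hX : LinearIndependent ℂ X)
    (hXV : span ℂ (range X) = span ℂ (range Z ∪ range W)) (hg : ∀ a b, g a b = h (X a) (X b))
    (hinv : ∀ a b, ∑ c, g a c * ginv c b = if a = b then 1 else 0) (χ : L) :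
    -(∑ a, ∑ b, (starRingEnd ℂ (ginv a b) * ω ⁅p10 χ, X a⁆ (σ (X b))
        + ginv a b * ω ⁅p01 χ, σ (X a)⁆ (X b)))
      + I * ∑ a, ∑ b, starRingEnd ℂ (ginv a b) * ω χ (Jmap ⁅X a, σ (X b)⁆) =
    -(I * LinearMap.trace ℂ _ ((LieAlgebra.ad ℂ L (p10 χ)).restrict (F.ad_mem (hp χ).1))
      - I * starRingEnd ℂ (LinearMap.trace ℂ _ ((LieAlgebra.ad ℂ L (σ (p01 χ))).restrict
        (F.ad_mem (F.sigma_mem_hol (hp χ).2.1)))))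
      + ∑ k, (c k (p10 χ) + starRingEnd ℂ (c k (σ (p01 χ)))) / 2 := by
  obtain ⟨hξ, hη, hsum⟩ := hp χ
  have hXmem : ∀ a, X a ∈ span ℂ (range Z ∪ range W) :=
    fun a => hXV ▸ Submodule.subset_span ⟨a, rfl⟩
  have hginv := conj_inv_apply_of_conj_apply (fun a b => by
    rw [hg, hg, m.herm _ (hXmem b) _ (hXmem a)]) hinv
  have hJ := m.sum_conj_inv_mul_fundamental_J F hp hJmap hXV hg hinv
    (inv_mul_eq_one_of_mul_eq_one hinv) hginv hξ hη
  rw [hsum] at hJ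
  simp only [Finset.sum_add_distrib]
  rw [m.sum_conj_inv_mul_fundamental_lie F hX hXV hg hinv hginv hξ,
    m.sum_inv_mul_fundamental_lie_sigma F hX hXV hg hinv hginv hη, hJ, Finset.mul_sum]
  have hhalf : ∀ z : ℂ, I * (-(I / 2) * z) = z / 2 := fun z => by
    linear_combination (-z / 2) * I_mul_I
  simp only [hhalf]
  ring

end IsAdaptedMetric

theorem exists_isSemidirectFrame (bas : Module.Basis ((Fin r ⊕ Fin r) ⊕ (Fin s ⊕ Fin s)) ℂ L)
    (hZ : ∀ k, Z k = bas (Sum.inl (Sum.inl k))) (hZb : ∀ k, Zb k = bas (Sum.inl (Sum.inr k)))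
    (hW : ∀ a, W a = bas (Sum.inr (Sum.inl a))) (hWb : ∀ a, Wb a = bas (Sum.inr (Sum.inr a)))
    (hZZb : ∀ k l, ⁅Z k, Zb l⁆ = if k = l then (-(I / 2)) • (Z k + Zb k) else 0)
    (hZZ : ∀ k l, ⁅Z k, Z l⁆ = 0)
    (hJabel : ∀ x ∈ span ℂ (range W ∪ range Wb), ∀ y ∈ span ℂ (range W ∪ range Wb), ⁅x, y⁆ = 0)
    (hZW : ∀ k a, ⁅Z k, W a⁆ ∈ span ℂ (range W))
    (hZbW : ∀ k a, ⁅Zb k, W a⁆ ∈ span ℂ (range W))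
    (hσinv : ∀ x, σ (σ x) = x) (hσZ : ∀ k, σ (Z k) = Zb k) (hσW : ∀ a, σ (W a) = Wb a)
    (hσbr : ∀ x y : L, σ ⁅x, y⁆ = ⁅σ x, σ y⁆) :
    ∃ (c : Fin r → L →ₗ[ℂ] ℂ) (pW : L →ₗ[ℂ] L), IsSemidirectFrame σ Z Zb W Wb c pW := by
  have hWJ : ∀ a, W a ∈ span ℂ (range W ∪ range Wb) :=
    fun a => Submodule.subset_span (Or.inl ⟨a, rfl⟩)
  have hWbJ : ∀ a, Wb a ∈ span ℂ (range W ∪ range Wb) :=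
    fun a => Submodule.subset_span (Or.inr ⟨a, rfl⟩)
  have hbas : ∀ {ι : Type} (f : ι → (Fin r ⊕ Fin r) ⊕ (Fin s ⊕ Fin s)) (P : ι → L),
      (∀ i, P i = bas (f i)) → range P = bas '' range f := fun f P hP => by
    rw [← Set.range_comp]; exact congrArg _ (funext hP)
  refine ⟨fun k => bas.coord (Sum.inl (Sum.inl k)),
    ∑ a, (bas.coord (Sum.inr (Sum.inl a))).smulRight (W a),
    ⟨hZZb, hZZ, hZW, hZbW, fun a b => hJabel _ (hWJ a) _ (hWJ b),
      fun a b => hJabel _ (hWJ a) _ (hWbJ b), hσinv, hσZ, hσW, hσbr, ?_, ?_, ?_, ?_, ?_, ?_⟩⟩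
  · intro k l; simp [hZ, Finsupp.single_apply, eq_comm]
  · intro k a; simp [hW]
  · intro k; simp [hZ, LinearMap.sum_apply]
  · intro a; simp [hW, LinearMap.sum_apply, Finsupp.single_apply]
  · intro u
    simp only [LinearMap.sum_apply, LinearMap.smulRight_apply]
    exact Submodule.sum_mem _ fun a _ => Submodule.smul_mem _ _ (Submodule.subset_span ⟨a, rfl⟩)
  · rw [hbas (Sum.inl ∘ Sum.inl) Z hZ, hbas (Sum.inr ∘ Sum.inl) W hW,
      hbas (Sum.inl ∘ Sum.inr) Zb hZb, hbas (Sum.inr ∘ Sum.inr) Wb hWb, ← Set.image_union,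
      ← Set.image_union]
    refine bas.linearIndependent.disjoint_span_image ?_
    rw [Set.disjoint_left]
    rintro _ (⟨k, rfl⟩ | ⟨a, rfl⟩) (⟨l, hl⟩ | ⟨b, hl⟩) <;> simp at hl

end LieAlgebra

theorem stmt_16_general (r s : ℕ)
    (L : Type*) [LieRing L] [LieAlgebra ℂ L]
    (bas : Module.Basis ((Fin r ⊕ Fin r) ⊕ (Fin s ⊕ Fin s)) ℂ L)
    (Z Zb : Fin r → L) (W Wb : Fin s → L)
    (hZ : ∀ k, Z k = bas (Sum.inl (Sum.inl k)))
    (hZb : ∀ k, Zb k = bas (Sum.inl (Sum.inr k)))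
    (hW : ∀ a, W a = bas (Sum.inr (Sum.inl a)))
    (hWb : ∀ a, Wb a = bas (Sum.inr (Sum.inr a)))
    -- (i) the structure of 𝔥
    (hZZb : ∀ k l, ⁅Z k, Zb l⁆ = if k = l then (-(I / 2)) • (Z k + Zb k) else 0)
    (hZZ : ∀ k l, ⁅Z k, Z l⁆ = 0)
    -- (ii) 𝔍 is an abelian ideal
    (hJabel : ∀ x ∈ Submodule.span ℂ (Set.range W ∪ Set.range Wb),
      ∀ y ∈ Submodule.span ℂ (Set.range W ∪ Set.range Wb), ⁅x, y⁆ = (0 : L))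
    -- (iii)
    (hZW : ∀ k a, ⁅Z k, W a⁆ ∈ Submodule.span ℂ (Set.range W))
    -- (iv) the weights λ_a
    (lam : Fin s → Fin r → ℂ)
    (hZbW : ∀ k a, ⁅Zb k, W a⁆ = (starRingEnd ℂ (lam a k)) • W a)
    -- the antilinear involution σ
    (σ : L →ₛₗ[starRingEnd ℂ] L)
    (hσinv : ∀ x, σ (σ x) = x)
    (hσZ : ∀ k, σ (Z k) = Zb k)
    (hσW : ∀ a, σ (W a) = Wb a)
    (hσbr : ∀ x y : L, σ ⁅x, y⁆ = ⁅σ x, σ y⁆)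
    -- the two Hermitian inner products h and h′
    (h h' : L →ₗ[ℂ] L →ₛₗ[starRingEnd ℂ] ℂ)
    (hherm : ∀ x ∈ Submodule.span ℂ (Set.range Z ∪ Set.range W),
      ∀ y ∈ Submodule.span ℂ (Set.range Z ∪ Set.range W),
        h x y = starRingEnd ℂ (h y x))
    (hherm' : ∀ x ∈ Submodule.span ℂ (Set.range Z ∪ Set.range W),
      ∀ y ∈ Submodule.span ℂ (Set.range Z ∪ Set.range W),
        h' x y = starRingEnd ℂ (h' y x))
    -- both make 𝔥^{1,0} and 𝔍^{1,0} orthogonal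
    (horth : ∀ x ∈ Submodule.span ℂ (Set.range Z),
      ∀ y ∈ Submodule.span ℂ (Set.range W), h x y = 0)
    (horth' : ∀ x ∈ Submodule.span ℂ (Set.range Z),
      ∀ y ∈ Submodule.span ℂ (Set.range W), h' x y = 0)
    -- both are diagonal on 𝔥^{1,0} with respect to {Z_1,…,Z_r}
    (A A' : Fin r → ℝ) (hA : ∀ i, 0 < A i) (hA' : ∀ i, 0 < A' i)
    (hdiag : ∀ i j, h (Z i) (Z j) = if i = j then (A i : ℂ) else 0)
    (hdiag' : ∀ i j, h' (Z i) (Z j) = if i = j then (A' i : ℂ) else 0)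
    -- the induced fundamental forms ω and ω′
    (ω ω' : L →ₗ[ℂ] L →ₗ[ℂ] ℂ)
    (hωalt : ∀ x : L, ω x x = 0) (hωalt' : ∀ x : L, ω' x x = 0)
    (hω10 : ∀ x ∈ Submodule.span ℂ (Set.range Z ∪ Set.range W),
      ∀ y ∈ Submodule.span ℂ (Set.range Z ∪ Set.range W), ω x y = 0)
    (hω01 : ∀ x ∈ Submodule.span ℂ (Set.range Zb ∪ Set.range Wb),
      ∀ y ∈ Submodule.span ℂ (Set.range Zb ∪ Set.range Wb), ω x y = 0)
    (hω10' : ∀ x ∈ Submodule.span ℂ (Set.range Z ∪ Set.range W),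
      ∀ y ∈ Submodule.span ℂ (Set.range Z ∪ Set.range W), ω' x y = 0)
    (hω01' : ∀ x ∈ Submodule.span ℂ (Set.range Zb ∪ Set.range Wb),
      ∀ y ∈ Submodule.span ℂ (Set.range Zb ∪ Set.range Wb), ω' x y = 0)
    (hωh : ∀ x ∈ Submodule.span ℂ (Set.range Z ∪ Set.range W),
      ∀ y ∈ Submodule.span ℂ (Set.range Z ∪ Set.range W), ω x (σ y) = I * h x y)
    (hωh' : ∀ x ∈ Submodule.span ℂ (Set.range Z ∪ Set.range W),
      ∀ y ∈ Submodule.span ℂ (Set.range Z ∪ Set.range W), ω' x (σ y) = I * h' x y)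
    -- bases of 𝔤^{1,0} and the matrices of h, h′ with their inverses
    (n : ℕ) (Xf Xf' : Fin n → L)
    (hXind : LinearIndependent ℂ Xf) (hXind' : LinearIndependent ℂ Xf')
    (hXspan : Submodule.span ℂ (Set.range Xf) =
      Submodule.span ℂ (Set.range Z ∪ Set.range W))
    (hXspan' : Submodule.span ℂ (Set.range Xf') =
      Submodule.span ℂ (Set.range Z ∪ Set.range W))
    (g ginv g' ginv' : Fin n → Fin n → ℂ)
    (hgmat : ∀ a b, g a b = h (Xf a) (Xf b))
    (hgmat' : ∀ a b, g' a b = h' (Xf' a) (Xf' b))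
    (hinv : ∀ a b, ∑ cc, g a cc * ginv cc b = if a = b then 1 else 0)
    (hinv' : ∀ a b, ∑ cc, g' a cc * ginv' cc b = if a = b then 1 else 0)
    -- the (1,0)- and (0,1)-projections and the complex structure J
    (p10 p01 : L → L)
    (hp : ∀ v : L, p10 v ∈ Submodule.span ℂ (Set.range Z ∪ Set.range W) ∧
      p01 v ∈ Submodule.span ℂ (Set.range Zb ∪ Set.range Wb) ∧ p10 v + p01 v = v)
    (Jmap : L → L) (hJmap : ∀ v, Jmap v = I • p10 v - I • p01 v)
    -- the Bismut-Ricci forms of ω and ω′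
    (ρB ρB' : L → L → ℂ)
    (hρ : ∀ X Y : L, ρB X Y =
      -(∑ a, ∑ b, (starRingEnd ℂ (ginv a b) * ω ⁅p10 ⁅X, Y⁆, Xf a⁆ (σ (Xf b))
          + ginv a b * ω ⁅p01 ⁅X, Y⁆, σ (Xf a)⁆ (Xf b)))
      + I * ∑ a, ∑ b, starRingEnd ℂ (ginv a b) * ω ⁅X, Y⁆ (Jmap ⁅Xf a, σ (Xf b)⁆))
    (hρ' : ∀ X Y : L, ρB' X Y =
      -(∑ a, ∑ b, (starRingEnd ℂ (ginv' a b) * ω' ⁅p10 ⁅X, Y⁆, Xf' a⁆ (σ (Xf' b))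
          + ginv' a b * ω' ⁅p01 ⁅X, Y⁆, σ (Xf' a)⁆ (Xf' b)))
      + I * ∑ a, ∑ b, starRingEnd ℂ (ginv' a b) * ω' ⁅X, Y⁆ (Jmap ⁅Xf' a, σ (Xf' b)⁆)) :
    ∀ X ∈ Submodule.span ℂ (Set.range Z ∪ Set.range W),
      ∀ Y ∈ Submodule.span ℂ (Set.range Zb ∪ Set.range Wb),
        ρB X Y = ρB' X Y := by
  obtain ⟨c, pW, F⟩ := exists_isSemidirectFrame bas hZ hZb hW hWb hZZb hZZ hJabel hZW
    (fun k a => hZbW k a ▸ Submodule.smul_mem _ _ (Submodule.subset_span ⟨a, rfl⟩))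
    hσinv hσZ hσW hσbr
  have m : IsAdaptedMetric σ Z Zb W Wb h ω A :=
    ⟨hherm, horth, hdiag, fun i => (hA i).ne', hωalt, hω10, hω01, hωh⟩
  have m' : IsAdaptedMetric σ Z Zb W Wb h' ω' A' :=
    ⟨hherm', horth', hdiag', fun i => (hA' i).ne', hωalt', hω10', hω01', hωh'⟩
  intro X _ Y _
  rw [hρ, hρ', m.bismut_eq F hp hJmap hXind hXspan hgmat hinv,
    m'.bismut_eq F hp hJmap hXind' hXspan' hgmat' hinv']

/-- In the semidirect-product setting `𝔤 = 𝔥 ⋉ 𝔍` satisfying (i)–(iv),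
let `h` and `h′` be two positive-definite Hermitian inner products on `𝔤^{1,0}` with
`h(𝔥^{1,0}, 𝔍^{1,0}) = 0 = h′(𝔥^{1,0}, 𝔍^{1,0})`, both diagonal on `𝔥^{1,0}` with respect
to `{Z_1,…,Z_r}` (with positive diagonal entries `A_i`, `A′_i`), and with arbitrary
restrictions to `𝔍^{1,0}`. Then the associated Bismut-Ricci forms agree on mixed pairs:
`ρ_B(ω)(X,Y) = ρ_B(ω′)(X,Y)` for all `X ∈ 𝔤^{1,0}` and `Y ∈ 𝔤^{0,1}`. -/
theorem stmt_16 (r s : ℕ) (hr : 1 ≤ r) (hs : 1 ≤ s)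
    (L : Type*) [LieRing L] [LieAlgebra ℂ L]
    (bas : Module.Basis ((Fin r ⊕ Fin r) ⊕ (Fin s ⊕ Fin s)) ℂ L)
    (Z Zb : Fin r → L) (W Wb : Fin s → L)
    (hZ : ∀ k, Z k = bas (Sum.inl (Sum.inl k)))
    (hZb : ∀ k, Zb k = bas (Sum.inl (Sum.inr k)))
    (hW : ∀ a, W a = bas (Sum.inr (Sum.inl a)))
    (hWb : ∀ a, Wb a = bas (Sum.inr (Sum.inr a)))
    -- (i) the structure of 𝔥
    (hZZb : ∀ k l, ⁅Z k, Zb l⁆ = if k = l then (-(I / 2)) • (Z k + Zb k) else 0)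
    (hZZ : ∀ k l, ⁅Z k, Z l⁆ = 0)
    (hZbZb : ∀ k l, ⁅Zb k, Zb l⁆ = 0)
    -- (ii) 𝔍 is an abelian ideal
    (hJabel : ∀ x ∈ Submodule.span ℂ (Set.range W ∪ Set.range Wb),
      ∀ y ∈ Submodule.span ℂ (Set.range W ∪ Set.range Wb), ⁅x, y⁆ = (0 : L))
    (hJideal : ∀ x : L, ∀ y ∈ Submodule.span ℂ (Set.range W ∪ Set.range Wb),
      ⁅x, y⁆ ∈ Submodule.span ℂ (Set.range W ∪ Set.range Wb))
    -- (iii)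
    (hZW : ∀ k a, ⁅Z k, W a⁆ ∈ Submodule.span ℂ (Set.range W))
    (hZbWb : ∀ k a, ⁅Zb k, Wb a⁆ ∈ Submodule.span ℂ (Set.range Wb))
    -- (iv) the weights λ_a
    (lam : Fin s → Fin r → ℂ)
    (hZWb : ∀ k a, ⁅Z k, Wb a⁆ = lam a k • Wb a)
    (hZbW : ∀ k a, ⁅Zb k, W a⁆ = (starRingEnd ℂ (lam a k)) • W a)
    -- the antilinear involution σ
    (σ : L →ₛₗ[starRingEnd ℂ] L)
    (hσinv : ∀ x, σ (σ x) = x)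
    (hσZ : ∀ k, σ (Z k) = Zb k)
    (hσW : ∀ a, σ (W a) = Wb a)
    (hσbr : ∀ x y : L, σ ⁅x, y⁆ = ⁅σ x, σ y⁆)
    -- the two Hermitian inner products h and h′
    (h h' : L →ₗ[ℂ] L →ₛₗ[starRingEnd ℂ] ℂ)
    (hherm : ∀ x ∈ Submodule.span ℂ (Set.range Z ∪ Set.range W),
      ∀ y ∈ Submodule.span ℂ (Set.range Z ∪ Set.range W),
        h x y = starRingEnd ℂ (h y x))
    (hherm' : ∀ x ∈ Submodule.span ℂ (Set.range Z ∪ Set.range W),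
      ∀ y ∈ Submodule.span ℂ (Set.range Z ∪ Set.range W),
        h' x y = starRingEnd ℂ (h' y x))
    (hposdef : ∀ x ∈ Submodule.span ℂ (Set.range Z ∪ Set.range W), x ≠ 0 →
      0 < (h x x).re)
    (hposdef' : ∀ x ∈ Submodule.span ℂ (Set.range Z ∪ Set.range W), x ≠ 0 →
      0 < (h' x x).re)
    -- both make 𝔥^{1,0} and 𝔍^{1,0} orthogonal
    (horth : ∀ x ∈ Submodule.span ℂ (Set.range Z),
      ∀ y ∈ Submodule.span ℂ (Set.range W), h x y = 0)
    (horth' : ∀ x ∈ Submodule.span ℂ (Set.range Z),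
      ∀ y ∈ Submodule.span ℂ (Set.range W), h' x y = 0)
    -- both are diagonal on 𝔥^{1,0} with respect to {Z_1,…,Z_r}
    (A A' : Fin r → ℝ) (hA : ∀ i, 0 < A i) (hA' : ∀ i, 0 < A' i)
    (hdiag : ∀ i j, h (Z i) (Z j) = if i = j then (A i : ℂ) else 0)
    (hdiag' : ∀ i j, h' (Z i) (Z j) = if i = j then (A' i : ℂ) else 0)
    -- the induced fundamental forms ω and ω′
    (ω ω' : L →ₗ[ℂ] L →ₗ[ℂ] ℂ)
    (hωalt : ∀ x : L, ω x x = 0) (hωalt' : ∀ x : L, ω' x x = 0)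
    (hω10 : ∀ x ∈ Submodule.span ℂ (Set.range Z ∪ Set.range W),
      ∀ y ∈ Submodule.span ℂ (Set.range Z ∪ Set.range W), ω x y = 0)
    (hω01 : ∀ x ∈ Submodule.span ℂ (Set.range Zb ∪ Set.range Wb),
      ∀ y ∈ Submodule.span ℂ (Set.range Zb ∪ Set.range Wb), ω x y = 0)
    (hω10' : ∀ x ∈ Submodule.span ℂ (Set.range Z ∪ Set.range W),
      ∀ y ∈ Submodule.span ℂ (Set.range Z ∪ Set.range W), ω' x y = 0)
    (hω01' : ∀ x ∈ Submodule.span ℂ (Set.range Zb ∪ Set.range Wb),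
      ∀ y ∈ Submodule.span ℂ (Set.range Zb ∪ Set.range Wb), ω' x y = 0)
    (hωh : ∀ x ∈ Submodule.span ℂ (Set.range Z ∪ Set.range W),
      ∀ y ∈ Submodule.span ℂ (Set.range Z ∪ Set.range W), ω x (σ y) = I * h x y)
    (hωh' : ∀ x ∈ Submodule.span ℂ (Set.range Z ∪ Set.range W),
      ∀ y ∈ Submodule.span ℂ (Set.range Z ∪ Set.range W), ω' x (σ y) = I * h' x y)
    -- bases of 𝔤^{1,0} and the matrices of h, h′ with their inverses
    (n : ℕ) (hn : n = r + s) (Xf Xf' : Fin n → L)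
    (hXind : LinearIndependent ℂ Xf) (hXind' : LinearIndependent ℂ Xf')
    (hXspan : Submodule.span ℂ (Set.range Xf) =
      Submodule.span ℂ (Set.range Z ∪ Set.range W))
    (hXspan' : Submodule.span ℂ (Set.range Xf') =
      Submodule.span ℂ (Set.range Z ∪ Set.range W))
    (g ginv g' ginv' : Fin n → Fin n → ℂ)
    (hgmat : ∀ a b, g a b = h (Xf a) (Xf b))
    (hgmat' : ∀ a b, g' a b = h' (Xf' a) (Xf' b))
    (hinv : ∀ a b, ∑ cc, g a cc * ginv cc b = if a = b then 1 else 0)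
    (hinv' : ∀ a b, ∑ cc, g' a cc * ginv' cc b = if a = b then 1 else 0)
    -- the (1,0)- and (0,1)-projections and the complex structure J
    (p10 p01 : L → L)
    (hp : ∀ v : L, p10 v ∈ Submodule.span ℂ (Set.range Z ∪ Set.range W) ∧
      p01 v ∈ Submodule.span ℂ (Set.range Zb ∪ Set.range Wb) ∧ p10 v + p01 v = v)
    (Jmap : L → L) (hJmap : ∀ v, Jmap v = I • p10 v - I • p01 v)
    -- the Bismut-Ricci forms of ω and ω′
    (ρB ρB' : L → L → ℂ)
    (hρ : ∀ X Y : L, ρB X Y =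
      -(∑ a, ∑ b, (starRingEnd ℂ (ginv a b) * ω ⁅p10 ⁅X, Y⁆, Xf a⁆ (σ (Xf b))
          + ginv a b * ω ⁅p01 ⁅X, Y⁆, σ (Xf a)⁆ (Xf b)))
      + I * ∑ a, ∑ b, starRingEnd ℂ (ginv a b) * ω ⁅X, Y⁆ (Jmap ⁅Xf a, σ (Xf b)⁆))
    (hρ' : ∀ X Y : L, ρB' X Y =
      -(∑ a, ∑ b, (starRingEnd ℂ (ginv' a b) * ω' ⁅p10 ⁅X, Y⁆, Xf' a⁆ (σ (Xf' b))
          + ginv' a b * ω' ⁅p01 ⁅X, Y⁆, σ (Xf' a)⁆ (Xf' b)))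
      + I * ∑ a, ∑ b, starRingEnd ℂ (ginv' a b) * ω' ⁅X, Y⁆ (Jmap ⁅Xf' a, σ (Xf' b)⁆)) :
    ∀ X ∈ Submodule.span ℂ (Set.range Z ∪ Set.range W),
      ∀ Y ∈ Submodule.span ℂ (Set.range Zb ∪ Set.range Wb),
        ρB X Y = ρB' X Y :=
  stmt_16_general r s L bas Z Zb W Wb hZ hZb hW hWb hZZb hZZ hJabel hZW lam hZbW σ hσinv hσZ hσW
    hσbr h h' hherm hherm' horth horth' A A' hA hA' hdiag hdiag' ω ω' hωalt hωalt' hω10 hω01 hω10'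
    hω01' hωh hωh' n Xf Xf' hXind hXind' hXspan hXspan' g ginv g' ginv' hgmat hgmat' hinv hinv' p10
    p01 hp Jmap hJmap ρB ρB' hρ hρ'
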